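/- arXiv:2301.10980 — 2 statements merged into one kernel-verified Lean document; each statement's English description precedes it below -/
import Mathlib

section
/- Let F : Θ ⊆ ℝ^d → ℝ be differentiable and strictly convex with ∇F a bijection from Θ onto its image. Define M_{∇F}(θ₁,…,θₙ; w) = (∇F)⁻¹(∑ᵢ wᵢ ∇F(θᵢ)) for weights w in the standard simplex. If A ∈ GL(d,ℝ), b ∈ ℝ^d, and F̄(x) = F(A⁻¹(x-b)) on AΘ + b, then the quasi-arithmetic average is equivariant: M_{∇F̄}(Aθ₁+b, …, Aθₙ+b; w) = A · M_{∇F}(θ₁,…,θₙ; w) + b. -/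
open RealInnerProductSpace

/-! By the chain rule `∇F̄(Ax + b) = A⁻ᵀ ∇F(x)`, i.e. `∇F̄ ∘ (A · + b) = A⁻ᵀ ∘ ∇F` on `Θ`.
As `A⁻ᵀ` is linear, it maps `∑ wᵢ ∇F(θᵢ)` to `∑ wᵢ ∇F̄(Aθᵢ + b)`, and as it is injective,
inverting `∇F̄` on `AΘ + b` amounts to inverting `∇F` on `Θ` and then applying `x ↦ Ax + b`. -/

theorem HasGradientAt.comp_clm_sub_const {E F : Type*} [NormedAddCommGroup E]
    [InnerProductSpace ℝ E] [CompleteSpace E] [NormedAddCommGroup F] [InnerProductSpace ℝ F]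
    [CompleteSpace F] {f : F → ℝ} {g : F} (L : E →L[ℝ] F) {b y : E}
    (h : HasGradientAt f g (L (y - b))) :
    HasGradientAt (fun z => f (L (z - b))) (L.adjoint g) y := by
  have hdual : InnerProductSpace.toDual ℝ E (L.adjoint g) =
      (InnerProductSpace.toDual ℝ F g).comp L := by
    ext v
    simp [ContinuousLinearMap.adjoint_inner_left]
  have hL : HasFDerivAt (fun z => L (z - b)) L y := by
    simpa using L.hasFDerivAt.sub_const (L b)
  rw [hasGradientAt_iff_hasFDerivAt, hdual]
  exact (hasGradientAt_iff_hasFDerivAt.mp h).comp y hL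

theorem gradient_comp_symm_sub_const {E F : Type*} [NormedAddCommGroup E]
    [InnerProductSpace ℝ E] [CompleteSpace E] [NormedAddCommGroup F] [InnerProductSpace ℝ F]
    [CompleteSpace F] {f : E → ℝ} (A : E ≃L[ℝ] F) (b : F) {x : E}
    (h : DifferentiableAt ℝ f x) :
    gradient (fun z => f (A.symm (z - b))) (A x + b) =
      (A.symm : F →L[ℝ] E).adjoint (gradient f x) := by
  have hf : HasGradientAt f (gradient f x) ((A.symm : F →L[ℝ] E) (A x + b - b)) := by
    simpa using h.hasGradientAt
  exact (hf.comp_clm_sub_const _).gradient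

theorem ContinuousLinearEquiv.leftInverse_adjoint {E F : Type*} [NormedAddCommGroup E]
    [InnerProductSpace ℝ E] [CompleteSpace E] [NormedAddCommGroup F] [InnerProductSpace ℝ F]
    [CompleteSpace F] (A : E ≃L[ℝ] F) :
    Function.LeftInverse (A : E →L[ℝ] F).adjoint (A.symm : F →L[ℝ] E).adjoint := fun v => by
  rw [← ContinuousLinearMap.comp_apply, ← ContinuousLinearMap.adjoint_comp]
  simp [ContinuousLinearMap.adjoint_id]

theorem Set.InjOn.invFunOn_image_of_semiconj {α β γ δ : Type*} [Nonempty α] [Nonempty γ]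
    {g : α → β} {g' : γ → δ} {φ : α → γ} {ψ : β → δ} {s : Set α} (hg : Set.InjOn g s)
    (hψ : Function.Injective ψ) (h : ∀ x ∈ s, g' (φ x) = ψ (g x)) {y : β} (hy : y ∈ g '' s) :
    Function.invFunOn g' (φ '' s) (ψ y) = φ (Function.invFunOn g s y) := by
  have hg' : Set.InjOn g' (φ '' s) := by
    rintro _ ⟨x₁, hx₁, rfl⟩ _ ⟨x₂, hx₂, rfl⟩ heq
    rw [h x₁ hx₁, h x₂ hx₂] at heq
    rw [hg hx₁ hx₂ (hψ heq)]
  set x := Function.invFunOn g s y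
  have hx : x ∈ s := Function.invFunOn_mem hy
  rw [← Function.invFunOn_eq hy, ← h x hx]
  exact hg'.leftInvOn_invFunOn (Set.mem_image_of_mem φ hx)

theorem qaa_affine_equivariance_general {d n : ℕ}
    (Θ : Set (EuclideanSpace ℝ (Fin d))) (F : EuclideanSpace ℝ (Fin d) → ℝ)
    (hdiff : ∀ x ∈ Θ, DifferentiableAt ℝ F x)
    (hinj : Set.InjOn (gradient F) Θ)
    (A : EuclideanSpace ℝ (Fin d) ≃L[ℝ] EuclideanSpace ℝ (Fin d))
    (b : EuclideanSpace ℝ (Fin d))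
    (Fbar : EuclideanSpace ℝ (Fin d) → ℝ)
    (hFbar : ∀ x, Fbar x = F (A.symm (x - b)))
    (θ : Fin n → EuclideanSpace ℝ (Fin d)) (hθ : ∀ i, θ i ∈ Θ)
    (w : Fin n → ℝ)
    (hmean : (∑ i, w i • gradient F (θ i)) ∈ gradient F '' Θ) :
    Function.invFunOn (gradient Fbar) ((fun x => A x + b) '' Θ)
        (∑ i, w i • gradient Fbar (A (θ i) + b)) =
      A (Function.invFunOn (gradient F) Θ (∑ i, w i • gradient F (θ i))) + b := by
  have hgrad : ∀ x ∈ Θ, gradient Fbar (A x + b) =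
      (A.symm : EuclideanSpace ℝ (Fin d) →L[ℝ] EuclideanSpace ℝ (Fin d)).adjoint
        (gradient F x) := fun x hx => by
    rw [show Fbar = _ from funext hFbar]
    exact gradient_comp_symm_sub_const A b (hdiff x hx)
  have hsum : ∑ i, w i • gradient Fbar (A (θ i) + b) =
      (A.symm : EuclideanSpace ℝ (Fin d) →L[ℝ] EuclideanSpace ℝ (Fin d)).adjoint
        (∑ i, w i • gradient F (θ i)) := by
    simp only [map_sum, map_smul, hgrad _ (hθ _)]
  rw [hsum]
  exact hinj.invFunOn_image_of_semiconj (φ := fun x => A x + b)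
    A.leftInverse_adjoint.injective hgrad hmean

/-- Equivariance of quasi-arithmetic averages under affine reparameterization:
with `F̄(x) = F(A⁻¹(x - b))` on `AΘ + b`, one has
`M_{∇F̄}(Aθ₁+b, …, Aθₙ+b; w) = A M_{∇F}(θ₁,…,θₙ; w) + b`, where
`M_{∇F}(θ₁,…,θₙ; w) = (∇F)⁻¹(∑ᵢ wᵢ ∇F(θᵢ))`. -/
theorem qaa_affine_equivariance {d n : ℕ}
    (Θ : Set (EuclideanSpace ℝ (Fin d))) (F : EuclideanSpace ℝ (Fin d) → ℝ)
    (hΘopen : IsOpen Θ) (hΘconv : Convex ℝ Θ)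
    (hdiff : ∀ x ∈ Θ, DifferentiableAt ℝ F x)
    (hconv : StrictConvexOn ℝ Θ F)
    (hinj : Set.InjOn (gradient F) Θ)
    (A : EuclideanSpace ℝ (Fin d) ≃L[ℝ] EuclideanSpace ℝ (Fin d))
    (b : EuclideanSpace ℝ (Fin d))
    (Fbar : EuclideanSpace ℝ (Fin d) → ℝ)
    (hFbar : ∀ x, Fbar x = F (A.symm (x - b)))
    (θ : Fin n → EuclideanSpace ℝ (Fin d)) (hθ : ∀ i, θ i ∈ Θ)
    (w : Fin n → ℝ) (hw : ∀ i, 0 ≤ w i) (hw1 : ∑ i, w i = 1)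
    (hmean : (∑ i, w i • gradient F (θ i)) ∈ gradient F '' Θ) :
    Function.invFunOn (gradient Fbar) ((fun x => A x + b) '' Θ)
        (∑ i, w i • gradient Fbar (A (θ i) + b)) =
      A (Function.invFunOn (gradient F) Θ (∑ i, w i • gradient F (θ i))) + b :=
  qaa_affine_equivariance_general Θ F hdiff hinj A b Fbar hFbar θ hθ w hmean
end

section
/- Let p_s(x) = (1/(πs)) · 1/(1 + (x/s)²) denote the Cauchy density with scale s > 0. Then the normalized harmonic mixture of p_{s₁} and p_{s₂} with equal weights, i.e., the density proportional to 2/(1/p_{s₁}(x) + 1/p_{s₂}(x)), is again a Cauchy density p_{s₁₂} with scale s₁₂ = sqrt((s₁s₂² + s₂s₁²)/(s₁+s₂)). -/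
open MeasureTheory

/-- The family of scale Cauchy densities `p_s(x) = (1/(πs)) / (1 + (x/s)²)` is
closed under normalized harmonic mixtures with equal weights: the density
proportional to `2/(1/p_{s₁} + 1/p_{s₂})`, i.e. `H(p_{s₁},p_{s₂})` normalized
by its integral, is the Cauchy density with scale
`s₁₂ = √((s₁s₂² + s₂s₁²)/(s₁+s₂))`. -/
theorem cauchy_harmonic_mixture {s₁ s₂ : ℝ} (hs₁ : 0 < s₁) (hs₂ : 0 < s₂)
    (p : ℝ → ℝ → ℝ)
    (hp : ∀ s x, p s x = (1 / (Real.pi * s)) * (1 / (1 + (x / s) ^ 2)))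
    (h : ℝ → ℝ)
    (hh : ∀ x, h x = 2 * p s₁ x * p s₂ x / (p s₁ x + p s₂ x)) :
    ∀ x, h x / (∫ y, h y) =
      p (Real.sqrt ((s₁ * s₂ ^ 2 + s₂ * s₁ ^ 2) / (s₁ + s₂))) x := by
  have hπ : (0:ℝ) < Real.pi := Real.pi_pos
  have hsum : (0:ℝ) < s₁ + s₂ := by linarith
  have harg : (s₁ * s₂ ^ 2 + s₂ * s₁ ^ 2) / (s₁ + s₂) = s₁ * s₂ := by
    field_simp; ring
  rw [harg] at *
  set t := Real.sqrt (s₁ * s₂) with hts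
  have ht : 0 < t := Real.sqrt_pos.2 (by positivity)
  have ht2 : t ^ 2 = s₁ * s₂ := Real.sq_sqrt (by positivity)
  have hx : ∀ y, h y = (2 / (Real.pi * (s₁ + s₂))) * (1 + (y / t) ^ 2)⁻¹ := by
    intro y
    have h1 : (0:ℝ) < 1 + (y / s₁) ^ 2 := by positivity
    have h2 : (0:ℝ) < 1 + (y / s₂) ^ 2 := by positivity
    have h3 : (0:ℝ) < 1 + (y / t) ^ 2 := by positivity
    rw [hh, hp, hp]
    have hden : 1 / (Real.pi * s₁) * (1 / (1 + (y / s₁) ^ 2)) +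
        1 / (Real.pi * s₂) * (1 / (1 + (y / s₂) ^ 2)) > 0 := by positivity
    rw [div_eq_iff (ne_of_gt hden)]
    field_simp
    rw [ht2]; ring
  have hint : (∫ y, h y) = 2 * t / (s₁ + s₂) := by
    have : (∫ y, h y) = (2 / (Real.pi * (s₁ + s₂))) * ∫ y, (1 + (y / t) ^ 2)⁻¹ := by
      rw [← integral_const_mul]
      exact integral_congr_ae (Filter.Eventually.of_forall fun y => hx y)
    rw [this, Measure.integral_comp_div (fun x : ℝ => (1 + x ^ 2)⁻¹) t,
      integral_univ_inv_one_add_sq, abs_of_pos ht, smul_eq_mul]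
    field_simp
  intro x
  rw [hx, hint, hp]
  have h3 : (0:ℝ) < 1 + (x / t) ^ 2 := by positivity
  field_simp
end
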